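/- Let f(x) = Hx + c with H Hamiltonian and energy E(x) = ½x^T Sx + c̃^T x as before, U symplectic, F = U†HU, and assume x − x₋ ∈ Range(U). Then the projected explicit exponential midpoint scheme x₊ = x + U e^{hF}U†(x₋ − x) + 2hUφ(hF)U†f(x) satisfies E(½(x₊ + x)) = E(½(x + x₋)). -/

import Mathlib

open Matrix

noncomputable def Jmat (n : ℕ) : Matrix (Fin n ⊕ Fin n) (Fin n ⊕ Fin n) ℝ :=
  Matrix.fromBlocks 0 1 (-1) 0

attribute [local instance] Matrix.linftyOpNormedRing Matrix.linftyOpNormedAlgebra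

noncomputable def expM {m : Type*} [Fintype m] [DecidableEq m] (A : Matrix m m ℝ) : Matrix m m ℝ :=
  NormedSpace.exp A

/-- `phiM A = ∫₀¹ e^{sA} ds`, the matrix version of `φ(z) = (e^z-1)/z`. -/
noncomputable def phiM {m : Type*} [Fintype m] [DecidableEq m] (A : Matrix m m ℝ) : Matrix m m ℝ :=
  ∫ s in (0:ℝ)..1, NormedSpace.exp (s • A)

noncomputable instance matENormedAddMonoid {m : Type*} [Fintype m] [DecidableEq m] :
    ENormedAddMonoid (Matrix m m ℝ) :=
  NormedAddGroup.toENormedAddMonoid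

section aux
variable {m : Type*} [Fintype m] [DecidableEq m]

lemma contExpSmul (A : Matrix m m ℝ) : Continuous fun s : ℝ => NormedSpace.exp (s • A) :=
  NormedSpace.exp_continuous.comp (continuous_id.smul continuous_const)

lemma intExpSmul (A : Matrix m m ℝ) :
    IntervalIntegrable (fun s : ℝ => NormedSpace.exp (s • A)) MeasureTheory.volume 0 1 :=
  (contExpSmul A).intervalIntegrable _ _

lemma mul_phiM (A : Matrix m m ℝ) : A * phiM A = expM A - 1 := by
  have h1 : A * phiM A = ∫ s in (0:ℝ)..1, A * NormedSpace.exp (s • A) := by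
    have := ContinuousLinearMap.intervalIntegral_comp_comm
      (ContinuousLinearMap.mul ℝ (Matrix m m ℝ) A) (intExpSmul A)
    simpa [phiM, ContinuousLinearMap.mul_apply'] using this.symm
  rw [h1]
  have h2 : ∀ t ∈ Set.uIcc (0:ℝ) 1, HasDerivAt (fun s : ℝ => NormedSpace.exp (s • A))
      (A * NormedSpace.exp (t • A)) t := fun t _ => hasDerivAt_exp_smul_const' A t
  rw [intervalIntegral.integral_eq_sub_of_hasDerivAt h2
    (((continuous_const.mul (contExpSmul A))).intervalIntegrable _ _)]
  simp [expM, one_smul]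

lemma phiM_mul (A : Matrix m m ℝ) : phiM A * A = expM A - 1 := by
  have h1 : phiM A * A = ∫ s in (0:ℝ)..1, NormedSpace.exp (s • A) * A := by
    have := ContinuousLinearMap.intervalIntegral_comp_comm
      ((ContinuousLinearMap.mul ℝ (Matrix m m ℝ)).flip A) (intExpSmul A)
    simpa [phiM, ContinuousLinearMap.mul_apply', ContinuousLinearMap.flip_apply] using this.symm
  rw [h1]
  have h2 : ∀ t ∈ Set.uIcc (0:ℝ) 1, HasDerivAt (fun s : ℝ => NormedSpace.exp (s • A))
      (NormedSpace.exp (t • A) * A) t := fun t _ => hasDerivAt_exp_smul_const A t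
  rw [intervalIntegral.integral_eq_sub_of_hasDerivAt h2
    ((((contExpSmul A).mul continuous_const)).intervalIntegrable _ _)]
  simp [expM, one_smul]

end aux

section aux2
variable {m : Type*} [Fintype m] [DecidableEq m]

noncomputable def trCLM (m : Type*) [Fintype m] [DecidableEq m] :
    Matrix m m ℝ →L[ℝ] Matrix m m ℝ :=
  LinearMap.toContinuousLinearMap
    { toFun := Matrix.transpose
      map_add' := fun a b => Matrix.transpose_add a b
      map_smul' := fun r a => Matrix.transpose_smul r a }

@[simp] lemma trCLM_apply (A : Matrix m m ℝ) : trCLM m A = Aᵀ := rfl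

lemma phiM_transpose (A : Matrix m m ℝ) : (phiM A)ᵀ = phiM Aᵀ := by
  calc (phiM A)ᵀ = trCLM m (phiM A) := rfl
    _ = ∫ s in (0:ℝ)..1, trCLM m (NormedSpace.exp (s • A)) :=
        (ContinuousLinearMap.intervalIntegral_comp_comm _ (intExpSmul A)).symm
    _ = phiM Aᵀ := by
        rw [phiM]
        congr 1
        funext s
        rw [trCLM_apply, ← Matrix.exp_transpose, Matrix.transpose_smul]

lemma expM_transpose (A : Matrix m m ℝ) : (expM A)ᵀ = expM Aᵀ :=
  (Matrix.exp_transpose A).symm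

lemma expM_mul_expM_neg (A : Matrix m m ℝ) : expM A * expM (-A) = 1 := by
  have h := Matrix.exp_add_of_commute A (-A) ((Commute.refl A).neg_right)
  simp only [add_neg_cancel, NormedSpace.exp_zero] at h
  exact h.symm

lemma expM_neg_mul_expM (A : Matrix m m ℝ) : expM (-A) * expM A = 1 := by
  have h := Matrix.exp_add_of_commute (-A) A ((Commute.refl A).neg_left)
  simp only [neg_add_cancel, NormedSpace.exp_zero] at h
  exact h.symm

lemma phiM_neg (A : Matrix m m ℝ) : phiM (-A) = expM (-A) * phiM A := by
  have key : ∀ s : ℝ, NormedSpace.exp (s • (-A))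
      = expM (-A) * NormedSpace.exp ((1 - s) • A) := by
    intro s
    rw [expM, ← Matrix.exp_add_of_commute]
    · congr 1
      module
    · exact (Commute.refl A).neg_left.smul_right (1-s)
  rw [phiM]
  simp_rw [key]
  have h2 : (∫ s in (0:ℝ)..1, expM (-A) * NormedSpace.exp ((1 - s) • A))
      = expM (-A) * ∫ s in (0:ℝ)..1, NormedSpace.exp ((1 - s) • A) := by
    have hint : IntervalIntegrable (fun s : ℝ => NormedSpace.exp ((1 - s) • A))
        MeasureTheory.volume 0 1 :=
      ((contExpSmul A).comp (continuous_const.sub continuous_id)).intervalIntegrable _ _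
    have := ContinuousLinearMap.intervalIntegral_comp_comm
      (ContinuousLinearMap.mul ℝ (Matrix m m ℝ) (expM (-A))) hint
    simpa [ContinuousLinearMap.mul_apply'] using this
  rw [h2, phiM]
  congr 1
  have := intervalIntegral.integral_comp_sub_left
    (fun s : ℝ => NormedSpace.exp (s • A)) 1 (a := 0) (b := 1)
  simpa using this

lemma commute_expM_exp (A : Matrix m m ℝ) (s : ℝ) :
    expM A * NormedSpace.exp (s • A) = NormedSpace.exp (s • A) * expM A :=
  (((Commute.refl A).smul_right s).exp).eq

lemma commute_expM_phiM (A : Matrix m m ℝ) : expM A * phiM A = phiM A * expM A := by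
  have h1 : expM A * phiM A = ∫ s in (0:ℝ)..1, expM A * NormedSpace.exp (s • A) := by
    have := ContinuousLinearMap.intervalIntegral_comp_comm
      (ContinuousLinearMap.mul ℝ (Matrix m m ℝ) (expM A)) (intExpSmul A)
    simpa [phiM, ContinuousLinearMap.mul_apply'] using this.symm
  have h2 : phiM A * expM A = ∫ s in (0:ℝ)..1, NormedSpace.exp (s • A) * expM A := by
    have := ContinuousLinearMap.intervalIntegral_comp_comm
      ((ContinuousLinearMap.mul ℝ (Matrix m m ℝ)).flip (expM A)) (intExpSmul A)
    simpa [ContinuousLinearMap.mul_apply', ContinuousLinearMap.flip_apply, phiM] using this.symm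
  rw [h1, h2]
  simp_rw [commute_expM_exp]

end aux2

section core
variable {m : Type*} [Fintype m] [DecidableEq m]

lemma skew_dot (B : Matrix m m ℝ) (hB : Bᵀ = -B) (v : m → ℝ) : v ⬝ᵥ B *ᵥ v = 0 := by
  have h1 : v ⬝ᵥ B *ᵥ v = (Bᵀ *ᵥ v) ⬝ᵥ v := by
    rw [Matrix.dotProduct_mulVec, Matrix.mulVec_transpose]
  rw [hB] at h1
  have : (-B *ᵥ v) ⬝ᵥ v = -(v ⬝ᵥ B *ᵥ v) := by
    rw [Matrix.neg_mulVec, neg_dotProduct, dotProduct_comm]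
  linarith [h1, this]

lemma pair_dot (B : Matrix m m ℝ) (v w : m → ℝ) : v ⬝ᵥ B *ᵥ w = w ⬝ᵥ Bᵀ *ᵥ v := by
  rw [Matrix.dotProduct_mulVec, ← Matrix.mulVec_transpose, dotProduct_comm]

lemma phiM_conj (g : (Matrix m m ℝ)ˣ) (A : Matrix m m ℝ) :
    phiM ((g : Matrix m m ℝ) * A * (↑g⁻¹ : Matrix m m ℝ))
      = (g : Matrix m m ℝ) * phiM A * (↑g⁻¹ : Matrix m m ℝ) := by
  have key : ∀ s : ℝ, NormedSpace.exp (s • ((g : Matrix m m ℝ) * A * (↑g⁻¹ : Matrix m m ℝ)))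
      = (g : Matrix m m ℝ) * NormedSpace.exp (s • A) * (↑g⁻¹ : Matrix m m ℝ) := by
    intro s
    have : s • ((g : Matrix m m ℝ) * A * (↑g⁻¹ : Matrix m m ℝ))
        = (g : Matrix m m ℝ) * (s • A) * (↑g⁻¹ : Matrix m m ℝ) := by
      simp [Matrix.mul_smul, Matrix.smul_mul]
    rw [this]
    exact Matrix.exp_units_conj g (s • A)
  rw [phiM, phiM]
  simp_rw [key]
  set L : Matrix m m ℝ →L[ℝ] Matrix m m ℝ :=
    (ContinuousLinearMap.mul ℝ (Matrix m m ℝ) (g : Matrix m m ℝ)).comp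
      ((ContinuousLinearMap.mul ℝ (Matrix m m ℝ)).flip (↑g⁻¹ : Matrix m m ℝ)) with hL
  have happ : ∀ X : Matrix m m ℝ, L X = (g : Matrix m m ℝ) * X * (↑g⁻¹ : Matrix m m ℝ) := by
    intro X
    rw [hL, mul_assoc]
    rfl
  have := ContinuousLinearMap.intervalIntegral_comp_comm L (intExpSmul A)
  calc (∫ s in (0:ℝ)..1, (g : Matrix m m ℝ) * NormedSpace.exp (s • A) * (↑g⁻¹ : Matrix m m ℝ))
      = ∫ s in (0:ℝ)..1, L (NormedSpace.exp (s • A)) := by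
        congr 1; funext s; exact (happ _).symm
    _ = L (∫ s in (0:ℝ)..1, NormedSpace.exp (s • A)) := this
    _ = _ := happ _

end core

section core2
variable {m : Type*} [Fintype m] [DecidableEq m]

lemma dmv {l p : Type*} [Fintype l] [Fintype p] (A : Matrix m l ℝ) (B : Matrix m p ℝ)
    (v : l → ℝ) (w : p → ℝ) :
    (A *ᵥ v) ⬝ᵥ (B *ᵥ w) = v ⬝ᵥ (Aᵀ * B) *ᵥ w :=
  calc (A *ᵥ v) ⬝ᵥ (B *ᵥ w) = (v ᵥ* Aᵀ) ⬝ᵥ (B *ᵥ w) := by rw [Matrix.vecMul_transpose]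
    _ = v ⬝ᵥ (Aᵀ *ᵥ (B *ᵥ w)) := (Matrix.dotProduct_mulVec _ _ _).symm
    _ = v ⬝ᵥ (Aᵀ * B) *ᵥ w := by rw [Matrix.mulVec_mulVec]

lemma conj_exp (J B : Matrix m m ℝ) (hJ : J * J = -1) (hBt : Bᵀ * J = -(J * B)) :
    (expM B)ᵀ * J = J * expM (-B) := by
  have h2 : J * -J = 1 := by rw [Matrix.mul_neg, hJ, neg_neg]
  have h3 : -J * J = 1 := by rw [Matrix.neg_mul, hJ, neg_neg]
  set Ju : (Matrix m m ℝ)ˣ := ⟨J, -J, h2, h3⟩ with hJu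
  have hconj : Bᵀ = J * (-B) * -J := by
    calc Bᵀ = Bᵀ * (J * -J) := by rw [h2, mul_one]
      _ = Bᵀ * J * -J := by rw [mul_assoc]
      _ = -(J * B) * -J := by rw [hBt]
      _ = J * -B * -J := by simp [Matrix.mul_neg, Matrix.neg_mul, mul_assoc]
  have hexp : (expM B)ᵀ = J * expM (-B) * -J := by
    rw [expM, ← Matrix.exp_transpose, hconj]
    exact Matrix.exp_units_conj Ju (-B)
  rw [hexp, mul_assoc (J * expM (-B)) (-J) J, h3, mul_one]

lemma core (J F : Matrix m m ℝ) (hJ : J * J = -1) (hJt : Jᵀ = -J)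
    (hsym : (J * F)ᵀ = J * F) (h : ℝ) (w g' : m → ℝ) :
    ((expM (h • F)) *ᵥ w + (h • phiM (h • F)) *ᵥ g' - w) ⬝ᵥ
        ((J * F) *ᵥ ((expM (h • F)) *ᵥ w + (h • phiM (h • F)) *ᵥ g' + w))
      + 2 * (((expM (h • F)) *ᵥ w + (h • phiM (h • F)) *ᵥ g' - w) ⬝ᵥ (J *ᵥ g')) = 0 := by
  set A : Matrix m m ℝ := h • F with hA
  set M : Matrix m m ℝ := expM A with hM
  set N : Matrix m m ℝ := expM (-A) with hN
  set Q : Matrix m m ℝ := h • phiM A with hQ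
  -- basic commutation facts
  have FtJ : Fᵀ * J = -(J * F) := by
    have h1 := hsym
    rw [Matrix.transpose_mul, hJt, Matrix.mul_neg] at h1
    rw [← h1, neg_neg]
  have hAt : Aᵀ * J = -(J * A) := by
    rw [hA, Matrix.transpose_smul, Matrix.smul_mul, FtJ, Matrix.mul_smul, ← smul_neg]
  have hAtneg : (-A)ᵀ * J = -(J * -A) := by
    simp [Matrix.transpose_neg, Matrix.neg_mul, Matrix.mul_neg, hAt]
  have cFM : F * M = M * F := by
    have : Commute F A := (Commute.refl F).smul_right h
    exact ((this.exp_right)).eq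
  have cFQ : F * Q = M - 1 := by
    rw [hQ, Matrix.mul_smul, ← Matrix.smul_mul, ← hA, mul_phiM, hM]
  have cQF : Q * F = M - 1 := by
    rw [hQ, Matrix.smul_mul, ← Matrix.mul_smul, ← hA, phiM_mul, hM]
  have cQM : Q * M = M * Q := by
    rw [hQ, Matrix.smul_mul, Matrix.mul_smul, hM, commute_expM_phiM]
  have cNM : N * M = 1 := expM_neg_mul_expM A
  have cNQM : N * Q * M = Q := by rw [mul_assoc, cQM, ← mul_assoc, cNM, one_mul]
  have E2 : Nᵀ * J = J * M := by
    have := conj_exp J (-A) hJ hAtneg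
    rwa [neg_neg, ← hM, ← hN] at this
  have hmJJ : -J * J = 1 := by rw [Matrix.neg_mul, hJ, neg_neg]
  have hJmJ : J * -J = 1 := by rw [Matrix.mul_neg, hJ, neg_neg]
  have E3 : Qᵀ * J = J * (N * Q) := by
    set Ju : (Matrix m m ℝ)ˣ := ⟨J, -J, hJmJ, hmJJ⟩ with hJu
    have hconj : Aᵀ = J * (-A) * -J := by
      calc Aᵀ = Aᵀ * (J * -J) := by rw [hJmJ, mul_one]
        _ = Aᵀ * J * -J := by rw [mul_assoc]
        _ = -(J * A) * -J := by rw [hAt]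
        _ = J * -A * -J := by simp [Matrix.mul_neg, Matrix.neg_mul, mul_assoc]
    have h4 : (phiM A)ᵀ = J * phiM (-A) * -J := by
      rw [phiM_transpose, hconj]
      exact phiM_conj Ju (-A)
    rw [hQ, Matrix.transpose_smul, Matrix.smul_mul, h4, phiM_neg, ← hN]
    rw [← mul_assoc J N (phiM A), mul_assoc (J * N * phiM A) (-J) J, hmJJ, mul_one]
    rw [Matrix.mul_smul, Matrix.mul_smul, mul_assoc]
  -- the skew matrix
  have Keq : Qᵀ * (J * (M + 1)) = J * (Q + N * Q) := by
    rw [← mul_assoc, E3, mul_add, mul_one, Matrix.mul_add]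
    rw [mul_assoc J (N * Q) M, cNQM, add_comm (J * Q)]
  have Kskew : (Qᵀ * (J * (M + 1)))ᵀ = -(Qᵀ * (J * (M + 1))) := by
    rw [Keq, Matrix.transpose_mul, hJt, Matrix.transpose_add, Matrix.transpose_mul]
    rw [Matrix.mul_neg, Matrix.add_mul, E3]
    rw [mul_assoc Qᵀ Nᵀ J, E2, ← mul_assoc Qᵀ J M, E3]
    rw [mul_assoc J (N * Q) M, cNQM, Matrix.mul_add]
    rw [add_comm (J * (N * Q))]
  -- vector reductions
  set z : m → ℝ := F *ᵥ w + g' with hz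
  have step1 : M *ᵥ w + Q *ᵥ g' - w = Q *ᵥ z := by
    rw [hz, Matrix.mulVec_add, Matrix.mulVec_mulVec, cQF, Matrix.sub_mulVec,
      Matrix.one_mulVec]
    abel
  have step2 : F *ᵥ (M *ᵥ w + Q *ᵥ g' + w) + (2:ℝ) • g' = (M + 1) *ᵥ z := by
    have e1 : F *ᵥ (M *ᵥ w) = M *ᵥ (F *ᵥ w) := by
      rw [Matrix.mulVec_mulVec, Matrix.mulVec_mulVec, cFM]
    have e2 : F *ᵥ (Q *ᵥ g') = M *ᵥ g' - g' := by
      rw [Matrix.mulVec_mulVec, cFQ, Matrix.sub_mulVec, Matrix.one_mulVec]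
    rw [hz, Matrix.mulVec_add, Matrix.mulVec_add, e1, e2, Matrix.add_mulVec,
      Matrix.one_mulVec, Matrix.mulVec_add, two_smul]
    abel
  rw [step1]
  have step3 : (J * F) *ᵥ (M *ᵥ w + Q *ᵥ g' + w) = J *ᵥ (F *ᵥ (M *ᵥ w + Q *ᵥ g' + w)) := by
    rw [Matrix.mulVec_mulVec]
  rw [step3]
  have step4 : 2 * ((Q *ᵥ z) ⬝ᵥ (J *ᵥ g')) = (Q *ᵥ z) ⬝ᵥ (J *ᵥ ((2:ℝ) • g')) := by
    rw [Matrix.mulVec_smul, dotProduct_smul, smul_eq_mul]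
  rw [step4, ← dotProduct_add, ← Matrix.mulVec_add, step2, Matrix.mulVec_mulVec, dmv]
  exact skew_dot _ Kskew z

end core2

lemma Jmat_mul_Jmat (n : ℕ) : Jmat n * Jmat n = -1 := by
  rw [Jmat, Matrix.fromBlocks_multiply]
  simp [← Matrix.fromBlocks_one, Matrix.fromBlocks_neg]

lemma Jmat_transpose (n : ℕ) : (Jmat n)ᵀ = -(Jmat n) := by
  rw [Jmat, Matrix.fromBlocks_transpose]
  simp [Matrix.fromBlocks_neg]

lemma Jmat_inv (n : ℕ) : (Jmat n)⁻¹ = -(Jmat n) :=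
  Matrix.inv_eq_left_inv (by rw [Matrix.neg_mul, Jmat_mul_Jmat, neg_neg])

theorem stmt18 (n k : ℕ) (S : Matrix (Fin n ⊕ Fin n) (Fin n ⊕ Fin n) ℝ) (hS : Sᵀ = S)
    (ctilde : (Fin n ⊕ Fin n) → ℝ)
    (H : Matrix (Fin n ⊕ Fin n) (Fin n ⊕ Fin n) ℝ) (hH : H = (Jmat n)⁻¹ * S)
    (c : (Fin n ⊕ Fin n) → ℝ) (hc : c = (Jmat n)⁻¹.mulVec ctilde)
    (E : ((Fin n ⊕ Fin n) → ℝ) → ℝ)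
    (hE : ∀ x, E x = (1/2) * (x ⬝ᵥ S.mulVec x) + ctilde ⬝ᵥ x)
    (f : ((Fin n ⊕ Fin n) → ℝ) → ((Fin n ⊕ Fin n) → ℝ))
    (hf : ∀ x, f x = H.mulVec x + c)
    (U : Matrix (Fin n ⊕ Fin n) (Fin k ⊕ Fin k) ℝ) (hU : Uᵀ * Jmat n * U = Jmat k)
    (Udag : Matrix (Fin k ⊕ Fin k) (Fin n ⊕ Fin n) ℝ) (hUdag : Udag = (Jmat k)⁻¹ * Uᵀ * Jmat n)
    (F : Matrix (Fin k ⊕ Fin k) (Fin k ⊕ Fin k) ℝ) (hF : F = Udag * H * U)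
    (h : ℝ) (x xm xp : (Fin n ⊕ Fin n) → ℝ)
    (hrange : ∃ ζ, x - xm = U.mulVec ζ)
    (hxp : xp = x + U.mulVec ((expM (h • F)).mulVec (Udag.mulVec (xm - x)))
      + (2 * h) • U.mulVec ((phiM (h • F)).mulVec (Udag.mulVec (f x)))) :
    E ((1/2 : ℝ) • (xp + x)) = E ((1/2 : ℝ) • (x + xm)) := by
  set a : (Fin n ⊕ Fin n) → ℝ := (1/2 : ℝ) • (xp + x) with hadef
  set b : (Fin n ⊕ Fin n) → ℝ := (1/2 : ℝ) • (x + xm) with hbdef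
  obtain ⟨ζ, hζ⟩ := hrange
  have hJJn : Jmat n * Jmat n = -1 := Jmat_mul_Jmat n
  have hJJk : Jmat k * Jmat k = -1 := Jmat_mul_Jmat k
  have hJtk : (Jmat k)ᵀ = -(Jmat k) := Jmat_transpose k
  have hJinvn : (Jmat n)⁻¹ = -(Jmat n) := Jmat_inv n
  have hJinvk : (Jmat k)⁻¹ = -(Jmat k) := Jmat_inv k
  have hJJ1n : Jmat n * (Jmat n)⁻¹ = 1 := by
    rw [hJinvn, Matrix.mul_neg, hJJn, neg_neg]
  have hJJ1k : Jmat k * (Jmat k)⁻¹ = 1 := by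
    rw [hJinvk, Matrix.mul_neg, hJJk, neg_neg]
  have hJ1invk : (Jmat k)⁻¹ * Jmat k = 1 := by
    rw [hJinvk, Matrix.neg_mul, hJJk, neg_neg]
  have hJH : Jmat n * H = S := by
    rw [hH, ← mul_assoc, hJJ1n, one_mul]
  have hJc : (Jmat n) *ᵥ c = ctilde := by
    rw [hc, Matrix.mulVec_mulVec, hJJ1n, Matrix.one_mulVec]
  have hU' : Uᵀ * (Jmat n * U) = Jmat k := by rw [← Matrix.mul_assoc]; exact hU
  have hUdagU : Udag * U = 1 := by
    rw [hUdag]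
    simp only [Matrix.mul_assoc]
    rw [hU', hJ1invk]
  have hJkUdag : Jmat k * Udag = Uᵀ * Jmat n := by
    rw [hUdag]
    simp only [← Matrix.mul_assoc]
    rw [hJJ1k, Matrix.one_mul]
  have hUtSU : Uᵀ * S * U = Jmat k * F := by
    rw [hF, ← hJH]
    simp only [← Matrix.mul_assoc]
    rw [hJkUdag]
  have hsymk : (Jmat k * F)ᵀ = Jmat k * F := by
    rw [← hUtSU, Matrix.transpose_mul, Matrix.transpose_mul, Matrix.transpose_transpose, hS,
      Matrix.mul_assoc]
  set w : (Fin k ⊕ Fin k) → ℝ := Udag *ᵥ ((1/2 : ℝ) • (xm - x)) with hwdef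
  set g' : (Fin k ⊕ Fin k) → ℝ := Udag *ᵥ (f x) with hgdef
  set M : Matrix (Fin k ⊕ Fin k) (Fin k ⊕ Fin k) ℝ := expM (h • F) with hMdef
  set P : Matrix (Fin k ⊕ Fin k) (Fin k ⊕ Fin k) ℝ := phiM (h • F) with hPdef
  have hxmx : xm - x = U *ᵥ (-ζ) := by
    rw [Matrix.mulVec_neg, ← hζ]
    abel
  have hUw : U *ᵥ w = (1/2 : ℝ) • (xm - x) := by
    rw [hwdef, hxmx, Matrix.mulVec_smul, Matrix.mulVec_mulVec, hUdagU, Matrix.one_mulVec,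
      ← Matrix.mulVec_smul]
  have h2w : Udag *ᵥ (xm - x) = (2 : ℝ) • w := by
    rw [hwdef, Matrix.mulVec_smul, smul_smul]
    norm_num
  have ha : a = x + U *ᵥ (M *ᵥ w) + U *ᵥ ((h • P) *ᵥ g') := by
    rw [hadef, hxp, h2w]
    simp only [Matrix.mulVec_smul, Matrix.smul_mulVec]
    module
  have hb : b = x + U *ᵥ w := by
    rw [hbdef, hUw]
    module
  have hab1 : a - b = U *ᵥ (M *ᵥ w + (h • P) *ᵥ g' - w) := by
    rw [ha, hb, Matrix.mulVec_sub, Matrix.mulVec_add]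
    abel
  have hab2 : a + b = (2 : ℝ) • x + U *ᵥ (M *ᵥ w + (h • P) *ᵥ g' + w) := by
    rw [ha, hb, Matrix.mulVec_add, Matrix.mulVec_add, two_smul]
    abel
  have hSxc : S *ᵥ x + ctilde = (Jmat n) *ᵥ (f x) := by
    rw [hf, Matrix.mulVec_add, hJc, Matrix.mulVec_mulVec, hJH]
  have hT1 : (U *ᵥ (M *ᵥ w + (h • P) *ᵥ g' - w)) ⬝ᵥ (S *ᵥ x)
      + ctilde ⬝ᵥ (U *ᵥ (M *ᵥ w + (h • P) *ᵥ g' - w))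
      = (M *ᵥ w + (h • P) *ᵥ g' - w) ⬝ᵥ ((Jmat k) *ᵥ g') := by
    rw [dotProduct_comm ctilde, ← dotProduct_add, hSxc, dmv, ← hJkUdag,
      ← Matrix.mulVec_mulVec (f x) (Jmat k) Udag, hgdef]
  have hT2 : (U *ᵥ (M *ᵥ w + (h • P) *ᵥ g' - w)) ⬝ᵥ (S *ᵥ (U *ᵥ (M *ᵥ w + (h • P) *ᵥ g' + w)))
      = (M *ᵥ w + (h • P) *ᵥ g' - w) ⬝ᵥ ((Jmat k * F) *ᵥ (M *ᵥ w + (h • P) *ᵥ g' + w)) := by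
    rw [Matrix.mulVec_mulVec (M *ᵥ w + (h • P) *ᵥ g' + w) S U, dmv,
      ← Matrix.mul_assoc Uᵀ S U, hUtSU]
  have hcore := core (Jmat k) F hJJk hJtk hsymk h w g'
  rw [← hMdef, ← hPdef] at hcore
  have key : a ⬝ᵥ S *ᵥ a - b ⬝ᵥ S *ᵥ b + 2 * (ctilde ⬝ᵥ a - ctilde ⬝ᵥ b) = 0 := by
    have expand : a ⬝ᵥ S *ᵥ a - b ⬝ᵥ S *ᵥ b = (a - b) ⬝ᵥ S *ᵥ (a + b) := by
      have hpair : a ⬝ᵥ S *ᵥ b = b ⬝ᵥ S *ᵥ a := by rw [pair_dot, hS]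
      rw [sub_dotProduct, Matrix.mulVec_add, dotProduct_add,
        dotProduct_add, hpair]
      ring
    have hcdiff : ctilde ⬝ᵥ a - ctilde ⬝ᵥ b = ctilde ⬝ᵥ (a - b) := by
      rw [dotProduct_sub]
    rw [expand, hcdiff, hab1, hab2, Matrix.mulVec_add, Matrix.mulVec_smul,
      dotProduct_add, dotProduct_smul]
    simp only [smul_eq_mul]
    linarith [hT1, hT2, hcore]
  rw [hE, hE]
  linarith [key]
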